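/- arXiv:1901.07970 — 2 statements merged into one kernel-verified Lean document; each statement's English description precedes it below -/
import Mathlib

section
/- Let p ≥ 1, let S, Q ∈ ℝ^{p×p} be symmetric, let λ > 0, let Ψ* ∈ ℝ^{p×p} with support U, let Ψ̂ be any global minimizer of the penalized loss f, and set Δ̂ = Ψ̂ − Ψ*. If 2‖SΨ*S − Q‖_∞ < λ/2, then 2·tr(Δ̂SΔ̂S) + λ‖Ψ̂_U − Ψ*_U‖₁ + λ‖Ψ̂_{U^c}‖₁ ≤ 4λ‖Ψ̂_U − Ψ*_U‖₁. (Lemma 2) -/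
/-!
Minimality of `Ψ̂` along every ray `Ψ̂ + sM` forces the quadratic form
`M ↦ tr(MᵀSMS)` to be nonnegative (otherwise the loss tends to `-∞`), so the loss is convex and
minimality along the segment towards `Ψ*` gives the variational inequality
`tr(ΔᵀSΔS) + tr(Δᵀ(SΨ*S − Q)) ≤ λ(‖Ψ*‖₁ − ‖Ψ̂‖₁)` for `Δ = Ψ̂ − Ψ*`.
The linear term is at least `−‖SΨ*S − Q‖_∞ ‖Δ‖₁ ≥ −(λ/4)(‖Δ_U‖₁ + ‖Ψ̂_{U^c}‖₁)`, the penalty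
difference is at most `λ(‖Δ_U‖₁ − ‖Ψ̂_{U^c}‖₁)`, and `tr(ΔSΔS) ≤ tr(ΔᵀSΔS)` because the form is
nonnegative at `Δ − Δᵀ`.
-/

open Matrix

/-- Entrywise ℓ1 norm of a matrix: `‖A‖₁ = ∑_{i,j} |A_{ij}|`. -/
noncomputable def entryL1 {p : ℕ} (A : Matrix (Fin p) (Fin p) ℝ) : ℝ :=
  ∑ i, ∑ j, |A i j|

/-- Entrywise max norm of a matrix: `‖A‖_∞ = max_{i,j} |A_{ij}|`. -/
noncomputable def entryMax {p : ℕ} (A : Matrix (Fin p) (Fin p) ℝ) : ℝ :=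
  ⨆ ij : Fin p × Fin p, |A ij.1 ij.2|

/-- `A_U`: the matrix agreeing with `A` on the support `U = {(i,j) : Ψ*_{ij} ≠ 0}` of `Ψstar`,
and zero elsewhere. -/
noncomputable def onSupp {p : ℕ} (Ψstar A : Matrix (Fin p) (Fin p) ℝ) : Matrix (Fin p) (Fin p) ℝ :=
  fun i j => if Ψstar i j ≠ 0 then A i j else 0

/-- `A_{U^c} = A - A_U`. -/
noncomputable def offSupp {p : ℕ} (Ψstar A : Matrix (Fin p) (Fin p) ℝ) : Matrix (Fin p) (Fin p) ℝ :=
  A - onSupp Ψstar A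

/-- The penalized loss `f(Ψ) = tr(ΨᵀSΨS)/2 − tr(ΨQ) + λ‖Ψ‖₁`. -/
noncomputable def penLoss {p : ℕ} (S Q : Matrix (Fin p) (Fin p) ℝ) (lam : ℝ)
    (Ψ : Matrix (Fin p) (Fin p) ℝ) : ℝ :=
  (Ψᵀ * S * Ψ * S).trace / 2 - (Ψ * Q).trace + lam * entryL1 Ψ

open Filter Topology

theorem linear_coeff_nonneg_of_nonneg_on_Ioc {x y : ℝ}
    (h : ∀ t ∈ Set.Ioc (0 : ℝ) 1, 0 ≤ t * y + t ^ 2 * x) : 0 ≤ y := by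
  have hlim : Tendsto (fun t : ℝ => y + t * x) (𝓝[>] 0) (𝓝 y) := by
    have : Continuous fun t : ℝ => y + t * x := by fun_prop
    simpa using (this.tendsto 0).mono_left nhdsWithin_le_nhds
  refine ge_of_tendsto hlim ?_
  filter_upwards [Ioc_mem_nhdsGT one_pos] with t ht
  have := h t ht
  have ht0 := ht.1
  nlinarith

theorem leading_coeff_nonneg_of_nonneg_on_Ioi {x y : ℝ}
    (h : ∀ s > (0 : ℝ), 0 ≤ s * y + s ^ 2 * x) : 0 ≤ x := by
  refine linear_coeff_nonneg_of_nonneg_on_Ioc (x := y) fun t ht => ?_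
  have ht0 := ht.1
  have := h t⁻¹ (inv_pos.mpr ht0)
  have key : t * x + t ^ 2 * y = t ^ 3 * (t⁻¹ * y + t⁻¹ ^ 2 * x) := by
    field_simp; ring
  rw [key]
  positivity

section entryL1

variable {p : ℕ}

theorem entryL1_nonneg (A : Matrix (Fin p) (Fin p) ℝ) : 0 ≤ entryL1 A :=
  Finset.sum_nonneg fun _ _ => Finset.sum_nonneg fun _ _ => abs_nonneg _

theorem entryL1_add_le (A B : Matrix (Fin p) (Fin p) ℝ) :
    entryL1 (A + B) ≤ entryL1 A + entryL1 B := by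
  simp only [entryL1, ← Finset.sum_add_distrib]
  exact Finset.sum_le_sum fun i _ => Finset.sum_le_sum fun j _ => abs_add_le _ _

theorem entryL1_smul (c : ℝ) (A : Matrix (Fin p) (Fin p) ℝ) :
    entryL1 (c • A) = |c| * entryL1 A := by
  simp [entryL1, Finset.mul_sum, abs_mul]

theorem entryL1_sub_comm (A B : Matrix (Fin p) (Fin p) ℝ) : entryL1 (A - B) = entryL1 (B - A) := by
  simp only [entryL1, Matrix.sub_apply, abs_sub_comm]

theorem entryL1_add_smul_sub_le (A B : Matrix (Fin p) (Fin p) ℝ) {t : ℝ} (ht : t ∈ Set.Icc 0 1) :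
    entryL1 (A + t • (B - A)) ≤ entryL1 A + t * (entryL1 B - entryL1 A) := by
  have hconv : A + t • (B - A) = (1 - t) • A + t • B := by module
  calc entryL1 (A + t • (B - A))
      ≤ entryL1 ((1 - t) • A) + entryL1 (t • B) := hconv ▸ entryL1_add_le _ _
    _ = entryL1 A + t * (entryL1 B - entryL1 A) := by
      rw [entryL1_smul, entryL1_smul, abs_of_nonneg (sub_nonneg.2 ht.2), abs_of_nonneg ht.1]
      ring

theorem entryL1_eq_onSupp_add_offSupp (P A : Matrix (Fin p) (Fin p) ℝ) :
    entryL1 A = entryL1 (onSupp P A) + entryL1 (offSupp P A) := by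
  simp only [entryL1, ← Finset.sum_add_distrib]
  refine Finset.sum_congr rfl fun i _ => Finset.sum_congr rfl fun j _ => ?_
  by_cases h : P i j = 0 <;> simp [onSupp, offSupp, h]

theorem onSupp_sub (P A B : Matrix (Fin p) (Fin p) ℝ) :
    onSupp P (A - B) = onSupp P A - onSupp P B := by
  ext i j
  by_cases h : P i j = 0 <;> simp [onSupp, h]

theorem offSupp_sub_self (P A : Matrix (Fin p) (Fin p) ℝ) :
    offSupp P (A - P) = offSupp P A := by
  ext i j
  by_cases h : P i j = 0 <;> simp [onSupp, offSupp, h]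

theorem offSupp_self (P : Matrix (Fin p) (Fin p) ℝ) : offSupp P P = 0 := by
  ext i j
  by_cases h : P i j = 0 <;> simp [onSupp, offSupp, h]

theorem entryL1_sub_onSupp_add_offSupp (P Ψ : Matrix (Fin p) (Fin p) ℝ) :
    entryL1 (Ψ - P) = entryL1 (onSupp P Ψ - onSupp P P) + entryL1 (offSupp P Ψ) := by
  rw [entryL1_eq_onSupp_add_offSupp P, onSupp_sub, offSupp_sub_self]

theorem entryL1_sub_entryL1_le (P Ψ : Matrix (Fin p) (Fin p) ℝ) :
    entryL1 P - entryL1 Ψ ≤ entryL1 (onSupp P Ψ - onSupp P P) - entryL1 (offSupp P Ψ) := by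
  have hP : entryL1 P = entryL1 (onSupp P P) := by
    rw [entryL1_eq_onSupp_add_offSupp P P, offSupp_self]
    simp [entryL1]
  have htriangle :
      entryL1 (onSupp P P) ≤ entryL1 (onSupp P Ψ) + entryL1 (onSupp P Ψ - onSupp P P) := by
    simpa [entryL1_sub_comm] using entryL1_add_le (onSupp P Ψ) (onSupp P P - onSupp P Ψ)
  linarith [entryL1_eq_onSupp_add_offSupp P Ψ]

theorem le_entryMax (G : Matrix (Fin p) (Fin p) ℝ) (i j : Fin p) : |G i j| ≤ entryMax G :=
  le_ciSup (f := fun ij : Fin p × Fin p => |G ij.1 ij.2|) (Set.finite_range _).bddAbove (i, j)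

theorem abs_trace_transpose_mul_le (A G : Matrix (Fin p) (Fin p) ℝ) :
    |(Aᵀ * G).trace| ≤ entryMax G * entryL1 A := by
  have htrace : (Aᵀ * G).trace = ∑ i, ∑ j, A j i * G j i := by
    simp [Matrix.trace, Matrix.mul_apply]
  rw [htrace, entryL1, Finset.sum_comm, Finset.mul_sum]
  refine (Finset.abs_sum_le_sum_abs _ _).trans <| Finset.sum_le_sum fun j _ => ?_
  rw [Finset.mul_sum]
  refine (Finset.abs_sum_le_sum_abs _ _).trans <| Finset.sum_le_sum fun i _ => ?_
  rw [abs_mul, mul_comm]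
  exact mul_le_mul_of_nonneg_right (le_entryMax G j i) (abs_nonneg _)

end entryL1

section traceForm

variable {n R : Type*} [Fintype n] [CommRing R] {S : Matrix n n R}

theorem trace_transpose_mul_mul_mul_swap (hS : S.IsSymm) (A B : Matrix n n R) :
    (Aᵀ * S * B * S).trace = (Bᵀ * S * A * S).trace := by
  rw [← trace_transpose]
  simp only [transpose_mul, transpose_transpose, hS.eq, Matrix.mul_assoc]
  rw [trace_mul_comm]
  simp only [Matrix.mul_assoc]

theorem trace_mul_mul_transpose_mul (A : Matrix n n R) :
    (A * S * Aᵀ * S).trace = (Aᵀ * S * A * S).trace := by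
  simpa only [Matrix.mul_assoc] using trace_mul_comm (A * S) (Aᵀ * S)

end traceForm

theorem trace_mul_mul_mul_le_trace_transpose_mul {n : Type*} [Fintype n] {S : Matrix n n ℝ}
    (hS : S.IsSymm) (hS_nonneg : ∀ M : Matrix n n ℝ, 0 ≤ (Mᵀ * S * M * S).trace) (A : Matrix n n ℝ) :
    (A * S * A * S).trace ≤ (Aᵀ * S * A * S).trace := by
  have h := hS_nonneg (A - Aᵀ)
  have hswap := trace_transpose_mul_mul_mul_swap hS A Aᵀ
  have htr := trace_mul_mul_transpose_mul (S := S) A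
  simp only [transpose_sub, transpose_transpose, Matrix.sub_mul, Matrix.mul_sub,
    trace_sub] at h hswap
  linarith

section minimizer

variable {p : ℕ} {S Q : Matrix (Fin p) (Fin p) ℝ} {lam : ℝ}

theorem penLoss_add_smul (hS : S.IsSymm) (A B : Matrix (Fin p) (Fin p) ℝ) (t : ℝ) :
    penLoss S Q lam (A + t • B) = penLoss S Q lam A
      + t * ((Bᵀ * S * A * S).trace - (B * Q).trace)
      + t ^ 2 * (Bᵀ * S * B * S).trace / 2
      + lam * (entryL1 (A + t • B) - entryL1 A) := by
  simp only [penLoss, Matrix.add_mul, Matrix.mul_add, transpose_add, transpose_smul,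
    Matrix.smul_mul, Matrix.mul_smul, trace_add, trace_smul, smul_eq_mul]
  rw [trace_transpose_mul_mul_mul_swap hS A B]
  ring

variable {Ψhat : Matrix (Fin p) (Fin p) ℝ}

theorem quadratic_part_nonneg_of_minimizer
    (hmin : ∀ Ψ : Matrix (Fin p) (Fin p) ℝ, penLoss S Q lam Ψhat ≤ penLoss S Q lam Ψ)
    (hS : S.IsSymm) (hlam : 0 ≤ lam) (M : Matrix (Fin p) (Fin p) ℝ) : 0 ≤ (Mᵀ * S * M * S).trace := by
  refine leading_coeff_nonneg_of_nonneg_on_Ioi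
    (y := 2 * ((Mᵀ * S * Ψhat * S).trace - (M * Q).trace + lam * entryL1 M)) fun s hs => ?_
  have h := hmin (Ψhat + s • M)
  rw [penLoss_add_smul hS] at h
  have hpen : entryL1 (Ψhat + s • M) ≤ entryL1 Ψhat + s * entryL1 M := by
    simpa [entryL1_smul, abs_of_pos hs] using entryL1_add_le Ψhat (s • M)
  nlinarith [mul_le_mul_of_nonneg_left hpen hlam]

theorem variational_inequality_of_minimizer
    (hmin : ∀ Ψ : Matrix (Fin p) (Fin p) ℝ, penLoss S Q lam Ψhat ≤ penLoss S Q lam Ψ)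
    (hS : S.IsSymm) (hQ : Q.IsSymm) (hlam : 0 ≤ lam) (Ψ : Matrix (Fin p) (Fin p) ℝ) :
    ((Ψhat - Ψ)ᵀ * S * (Ψhat - Ψ) * S).trace + ((Ψhat - Ψ)ᵀ * (S * Ψ * S - Q)).trace
      ≤ lam * (entryL1 Ψ - entryL1 Ψhat) := by
  have hslope := linear_coeff_nonneg_of_nonneg_on_Ioc
    (x := ((Ψ - Ψhat)ᵀ * S * (Ψ - Ψhat) * S).trace / 2)
    (y := ((Ψ - Ψhat)ᵀ * S * Ψhat * S).trace - ((Ψ - Ψhat) * Q).trace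
      + lam * (entryL1 Ψ - entryL1 Ψhat)) fun t ht => by
    have h := hmin (Ψhat + t • (Ψ - Ψhat))
    rw [penLoss_add_smul hS] at h
    have hpen := entryL1_add_smul_sub_le Ψhat Ψ (Set.Ioc_subset_Icc_self ht)
    nlinarith [mul_le_mul_of_nonneg_left hpen hlam]
  have hgrad : ((Ψ - Ψhat)ᵀ * S * Ψhat * S).trace - ((Ψ - Ψhat) * Q).trace
      = -(((Ψhat - Ψ)ᵀ * S * (Ψhat - Ψ) * S).trace
        + ((Ψhat - Ψ)ᵀ * (S * Ψ * S - Q)).trace) := by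
    have hQtr : ((Ψ - Ψhat) * Q).trace = ((Ψ - Ψhat)ᵀ * Q).trace := by
      conv_rhs => rw [← hQ.eq, trace_transpose_mul]
    rw [hQtr]
    obtain ⟨Δ, rfl⟩ : ∃ Δ, Ψhat = Ψ + Δ := ⟨Ψhat - Ψ, by abel⟩
    simp only [sub_add_cancel_left, transpose_neg, neg_mul, Matrix.mul_add, Matrix.mul_assoc,
      neg_add_rev, Matrix.add_mul, trace_add, trace_neg, sub_neg_eq_add, add_sub_cancel_left,
      Matrix.mul_sub, trace_sub, neg_sub]
    ring
  linarith

end minimizer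

theorem lemma2_general {p : ℕ} (S Q : Matrix (Fin p) (Fin p) ℝ)
    (hS : S.IsSymm) (hQ : Q.IsSymm) (lam : ℝ) (hlam : 0 < lam)
    (Ψstar Ψhat : Matrix (Fin p) (Fin p) ℝ)
    (hmin : ∀ Ψ : Matrix (Fin p) (Fin p) ℝ, penLoss S Q lam Ψhat ≤ penLoss S Q lam Ψ)
    (htune : 2 * entryMax (S * Ψstar * S - Q) < lam / 2) :
    2 * ((Ψhat - Ψstar) * S * (Ψhat - Ψstar) * S).trace
        + lam * entryL1 (onSupp Ψstar Ψhat - onSupp Ψstar Ψstar)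
        + lam * entryL1 (offSupp Ψstar Ψhat) ≤
      4 * lam * entryL1 (onSupp Ψstar Ψhat - onSupp Ψstar Ψstar) := by
  have htranspose := trace_mul_mul_mul_le_trace_transpose_mul hS
    (quadratic_part_nonneg_of_minimizer hmin hS hlam.le) (Ψhat - Ψstar)
  have hvariational := variational_inequality_of_minimizer hmin hS hQ hlam.le Ψstar
  have hlin := neg_le_of_abs_le (abs_trace_transpose_mul_le (Ψhat - Ψstar) (S * Ψstar * S - Q))
  have htune' := mul_le_mul_of_nonneg_right htune.le (entryL1_nonneg (Ψhat - Ψstar))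
  rw [entryL1_sub_onSupp_add_offSupp] at hlin htune'
  have hpen := mul_le_mul_of_nonneg_left (entryL1_sub_entryL1_le Ψstar Ψhat) hlam.le
  linarith [mul_nonneg hlam.le (entryL1_nonneg (onSupp Ψstar Ψhat - onSupp Ψstar Ψstar)),
    mul_nonneg hlam.le (entryL1_nonneg (offSupp Ψstar Ψhat))]

/-- **Lemma 2.** Let `Δ̂ = Ψ̂ − Ψ*`. If `2‖SΨ*S − Q‖_∞ < λ/2`, then
`2 tr(Δ̂SΔ̂S) + λ‖Ψ̂_U − Ψ*_U‖₁ + λ‖Ψ̂_{U^c}‖₁ ≤ 4λ‖Ψ̂_U − Ψ*_U‖₁`. -/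
theorem lemma2 {p : ℕ} (hp : 1 ≤ p) (S Q : Matrix (Fin p) (Fin p) ℝ)
    (hS : S.IsSymm) (hQ : Q.IsSymm) (lam : ℝ) (hlam : 0 < lam)
    (Ψstar Ψhat : Matrix (Fin p) (Fin p) ℝ)
    (hmin : ∀ Ψ : Matrix (Fin p) (Fin p) ℝ, penLoss S Q lam Ψhat ≤ penLoss S Q lam Ψ)
    (htune : 2 * entryMax (S * Ψstar * S - Q) < lam / 2) :
    2 * ((Ψhat - Ψstar) * S * (Ψhat - Ψstar) * S).trace
        + lam * entryL1 (onSupp Ψstar Ψhat - onSupp Ψstar Ψstar)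
        + lam * entryL1 (offSupp Ψstar Ψhat) ≤
      4 * lam * entryL1 (onSupp Ψstar Ψhat - onSupp Ψstar Ψstar) :=
  lemma2_general S Q hS hQ lam hlam Ψstar Ψhat hmin htune
end

section
/- Suppose X ∈ ℝ^p is a mean-zero random vector with positive definite covariance Σ_X and finite fourth moments satisfying E(X_i X_j X_k) = 0 for all i,j,k (condition C1), and Y follows model (2) with ε mean-zero and independent of X. Then, with Z = Σ_X⁻¹X, every entry of the principal Hessian matrix Ψ = Σ_X⁻¹ Σ_{YXX} Σ_X⁻¹ satisfies ψ_{ij} = Σ_{k ≤ ℓ} β_{kℓ} · Cov(X_k X_ℓ, Z_i Z_j). (Key intermediate identity in the proof of Proposition 2) -/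
open MeasureTheory ProbabilityTheory Matrix

/-!
With `Z = Σ_X⁻¹ X` and `Σ_X⁻¹` symmetric, `Z_i Z_j = Σ_{a,b} (Σ_X⁻¹)_{ia} (Σ_X⁻¹)_{jb} X_a X_b`, so
linearity of the integral gives `ψ_ij = E[(Y - E Y) Z_i Z_j] = Cov(Y, Z_i Z_j)`. This covariance
is linear in `Y`, and model (2) splits it into three parts. The linear terms give
`Cov(X_m, Z_i Z_j)`, a combination of third moments and means of `X`, hence zero by C1; the noise
gives `Cov(ε, Z_i Z_j) = 0` because `Z_i Z_j` is a function of `X`, independent of `ε`. Only the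
quadratic terms `β_kℓ Cov(X_k X_ℓ, Z_i Z_j)` remain.
-/

namespace Matrix

variable {R ι m n : Type*} [CommSemiring R] [Fintype ι]

theorem mulVec_apply_mul_mulVec_apply (A : Matrix m ι R) (B : Matrix n ι R) (x : ι → R)
    (i : m) (j : n) :
    (A *ᵥ x) i * (B *ᵥ x) j = ∑ a, ∑ b, A i a * B j b * (x a * x b) := by
  simp only [mulVec, dotProduct, Finset.sum_mul_sum]
  exact Finset.sum_congr rfl fun a _ => Finset.sum_congr rfl fun b _ => by ring

theorem mul_mul_transpose_apply (A : Matrix m ι R) (M : Matrix ι ι R) (B : Matrix n ι R)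
    (i : m) (j : n) :
    (A * M * Bᵀ) i j = ∑ a, ∑ b, A i a * B j b * M a b := by
  simp only [mul_apply, transpose_apply, Finset.sum_mul]
  rw [Finset.sum_comm]
  exact Finset.sum_congr rfl fun a _ => Finset.sum_congr rfl fun b _ => by ring

end Matrix

section SecondMoments

variable {Ω ι m n : Type*} [MeasurableSpace Ω] {μ : Measure Ω} [Fintype ι]
  {X : Ω → ι → ℝ} {h : Ω → ℝ}

theorem Integrable.sub_const_mul {f g : Ω → ℝ} (hfg : Integrable (fun ω => f ω * g ω) μ)
    (hg : Integrable g μ) (c : ℝ) : Integrable (fun ω => (f ω - c) * g ω) μ := by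
  refine (hfg.sub (hg.const_mul c)).congr (.of_forall fun ω => ?_)
  simp only [Pi.sub_apply, sub_mul]

theorem integrable_mul_mulVec_apply_mul_mulVec_apply
    (A : Matrix m ι ℝ) (B : Matrix n ι ℝ)
    (hX : ∀ a b, Integrable (fun ω => h ω * (X ω a * X ω b)) μ) (i : m) (j : n) :
    Integrable (fun ω => h ω * ((A *ᵥ X ω) i * (B *ᵥ X ω) j)) μ := by
  simp_rw [mulVec_apply_mul_mulVec_apply, Finset.mul_sum, mul_left_comm _ (A i _ * B j _)]
  exact integrable_finsetSum _ fun a _ => integrable_finsetSum _ fun b _ =>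
    (hX a b).const_mul _

theorem integral_mul_mulVec_apply_mul_mulVec_apply
    (A : Matrix m ι ℝ) (B : Matrix n ι ℝ)
    (hX : ∀ a b, Integrable (fun ω => h ω * (X ω a * X ω b)) μ) (i : m) (j : n) :
    ∫ ω, h ω * ((A *ᵥ X ω) i * (B *ᵥ X ω) j) ∂μ
      = ∑ a, ∑ b, A i a * B j b * ∫ ω, h ω * (X ω a * X ω b) ∂μ := by
  simp_rw [mulVec_apply_mul_mulVec_apply, Finset.mul_sum, mul_left_comm _ (A i _ * B j _)]
  rw [integral_finsetSum _ fun a _ => integrable_finsetSum _ fun b _ =>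
    (hX a b).const_mul _]
  refine Finset.sum_congr rfl fun a _ => ?_
  rw [integral_finsetSum _ fun b _ => (hX a b).const_mul _]
  simp only [integral_const_mul]

theorem mul_mul_apply_eq_integral_of_transpose_eq {A M : Matrix ι ι ℝ} (hA : Aᵀ = A)
    (hM : ∀ a b, M a b = ∫ ω, h ω * (X ω a * X ω b) ∂μ)
    (hX : ∀ a b, Integrable (fun ω => h ω * (X ω a * X ω b)) μ) (i j : ι) :
    (A * M * A) i j = ∫ ω, h ω * ((A *ᵥ X ω) i * (A *ᵥ X ω) j) ∂μ := by
  rw [integral_mul_mulVec_apply_mul_mulVec_apply A A hX]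
  simp only [← hM]
  rw [← mul_mul_transpose_apply, hA]

end SecondMoments

section QuadraticModel

variable {Ω ι : Type*} [MeasurableSpace Ω] {μ : Measure Ω} [Fintype ι]
  {X : Ω → ι → ℝ} {ε Y W : Ω → ℝ} {θ : ι → ℝ} {β : ι → ι → ℝ} {s : ι → Finset ι}

omit [MeasurableSpace Ω] in
theorem mul_eq_of_quadratic_model
    (hY : ∀ ω, Y ω = ∑ m, θ m * X ω m + ∑ k, ∑ l ∈ s k, β k l * X ω k * X ω l + ε ω)
    (ω : Ω) :
    Y ω * W ω = ∑ m, θ m * (X ω m * W ω)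
      + ∑ k, ∑ l ∈ s k, β k l * (X ω k * X ω l * W ω) + ε ω * W ω := by
  simp only [hY, add_mul, Finset.sum_mul, mul_assoc]

theorem integrable_mul_of_quadratic_model
    (hY : ∀ ω, Y ω = ∑ m, θ m * X ω m + ∑ k, ∑ l ∈ s k, β k l * X ω k * X ω l + ε ω)
    (hXW : ∀ m, Integrable (fun ω => X ω m * W ω) μ)
    (hXXW : ∀ k l, Integrable (fun ω => X ω k * X ω l * W ω) μ)
    (hεW : Integrable (fun ω => ε ω * W ω) μ) :
    Integrable (fun ω => Y ω * W ω) μ := by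
  simp_rw [mul_eq_of_quadratic_model hY]
  exact ((integrable_finsetSum _ fun m _ => (hXW m).const_mul _).add
    (integrable_finsetSum _ fun k _ => integrable_finsetSum _ fun l _ =>
      (hXXW k l).const_mul _)).add hεW

theorem integral_mul_of_quadratic_model
    (hY : ∀ ω, Y ω = ∑ m, θ m * X ω m + ∑ k, ∑ l ∈ s k, β k l * X ω k * X ω l + ε ω)
    (hXW : ∀ m, Integrable (fun ω => X ω m * W ω) μ)
    (hXXW : ∀ k l, Integrable (fun ω => X ω k * X ω l * W ω) μ)
    (hεW : Integrable (fun ω => ε ω * W ω) μ) :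
    ∫ ω, Y ω * W ω ∂μ = ∑ m, θ m * ∫ ω, X ω m * W ω ∂μ
      + ∑ k, ∑ l ∈ s k, β k l * ∫ ω, X ω k * X ω l * W ω ∂μ + ∫ ω, ε ω * W ω ∂μ := by
  have hθ : Integrable (fun ω => ∑ m, θ m * (X ω m * W ω)) μ :=
    integrable_finsetSum _ fun m _ => (hXW m).const_mul _
  have hβ : Integrable (fun ω => ∑ k, ∑ l ∈ s k, β k l * (X ω k * X ω l * W ω)) μ :=
    integrable_finsetSum _ fun k _ => integrable_finsetSum _ fun l _ => (hXXW k l).const_mul _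
  have hθβ : Integrable (fun ω => ∑ m, θ m * (X ω m * W ω)
      + ∑ k, ∑ l ∈ s k, β k l * (X ω k * X ω l * W ω)) μ := hθ.add hβ
  simp_rw [mul_eq_of_quadratic_model hY]
  rw [integral_add hθβ hεW, integral_add hθ hβ,
    integral_finsetSum _ fun m _ => (hXW m).const_mul _,
    integral_finsetSum _ fun k _ => integrable_finsetSum _ fun l _ => (hXXW k l).const_mul _]
  simp only [integral_finsetSum _ fun l _ => (hXXW _ l).const_mul _, integral_const_mul]

theorem integral_centered_mul_of_quadratic_model
    (hY : ∀ ω, Y ω = ∑ m, θ m * X ω m + ∑ k, ∑ l ∈ s k, β k l * X ω k * X ω l + ε ω)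
    (hX : ∀ m, Integrable (fun ω => X ω m) μ)
    (hXX : ∀ k l, Integrable (fun ω => X ω k * X ω l) μ) (hε : Integrable ε μ)
    (hW : Integrable W μ) (hXW : ∀ m, Integrable (fun ω => X ω m * W ω) μ)
    (hXXW : ∀ k l, Integrable (fun ω => X ω k * X ω l * W ω) μ)
    (hεW : Integrable (fun ω => ε ω * W ω) μ) :
    ∫ ω, (Y ω - ∫ ω', Y ω' ∂μ) * W ω ∂μ
      = ∑ m, θ m * (∫ ω, X ω m * W ω ∂μ - (∫ ω, X ω m ∂μ) * ∫ ω, W ω ∂μ)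
        + ∑ k, ∑ l ∈ s k, β k l *
            (∫ ω, X ω k * X ω l * W ω ∂μ - (∫ ω, X ω k * X ω l ∂μ) * ∫ ω, W ω ∂μ)
        + (∫ ω, ε ω * W ω ∂μ - (∫ ω, ε ω ∂μ) * ∫ ω, W ω ∂μ) := by
  have hEY := integral_mul_of_quadratic_model (W := fun _ => 1) hY
    (by simpa using hX) (by simpa using hXX) (by simpa using hε)
  simp only [mul_one] at hEY
  simp_rw [sub_mul]
  rw [integral_sub (integrable_mul_of_quadratic_model hY hXW hXXW hεW) (hW.const_mul _),
    integral_const_mul, integral_mul_of_quadratic_model hY hXW hXXW hεW, hEY]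
  simp only [mul_sub, Finset.sum_sub_distrib, ← mul_assoc, ← Finset.sum_mul]
  ring

end QuadraticModel

theorem prop2_key_identity_general {Ω : Type*} [MeasurableSpace Ω] (μ : Measure Ω) {p : ℕ}
    (X : Ω → Fin p → ℝ)
    (Sig : Matrix (Fin p) (Fin p) ℝ)
    (hmean : ∀ i, ∫ ω, X ω i ∂μ = 0)
    (hcov : ∀ i j, ∫ ω, X ω i * X ω j ∂μ = Sig i j)
    (hmom4 : ∀ i j k l : Fin p, Integrable (fun ω => X ω i * X ω j * X ω k * X ω l) μ)
    (hmom2 : ∀ i j : Fin p, Integrable (fun ω => X ω i * X ω j) μ)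
    (hXint : ∀ i, Integrable (fun ω => X ω i) μ)
    -- condition C1: third moments vanish
    (hC1 : ∀ i j k : Fin p, ∫ ω, X ω i * X ω j * X ω k ∂μ = 0)
    (hmom3 : ∀ i j k : Fin p, Integrable (fun ω => X ω i * X ω j * X ω k) μ)
    (Z : Ω → Fin p → ℝ) (hZ : ∀ ω, Z ω = Sig⁻¹.mulVec (X ω))
    -- model (2)
    (θ : Fin p → ℝ) (β : Fin p → Fin p → ℝ)
    (ε : Ω → ℝ) (hindep : IndepFun ε X μ)
    (hεint : Integrable ε μ)
    (Y : Ω → ℝ)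
    (hY : ∀ ω, Y ω = ∑ i, θ i * X ω i
        + ∑ i, ∑ j ∈ Finset.Ici i, β i j * X ω i * X ω j + ε ω)
    (hYXX : ∀ k l : Fin p, Integrable (fun ω => Y ω * X ω k * X ω l) μ)
    (Syxx Ψ : Matrix (Fin p) (Fin p) ℝ)
    (hSyxx : ∀ k l, Syxx k l = ∫ ω, (Y ω - ∫ ω', Y ω' ∂μ) * (X ω k * X ω l) ∂μ)
    (hΨ : Ψ = Sig⁻¹ * Syxx * Sig⁻¹) :
    ∀ i j : Fin p,
      Ψ i j = ∑ k, ∑ l ∈ Finset.Ici k, β k l *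
        ((∫ ω, (X ω k * X ω l) * (Z ω i * Z ω j) ∂μ)
          - (∫ ω, X ω k * X ω l ∂μ) * (∫ ω, Z ω i * Z ω j ∂μ)) := by
  obtain rfl : Z = fun ω => Sig⁻¹ *ᵥ X ω := funext hZ
  intro i j
  set W : Ω → ℝ := fun ω => (Sig⁻¹ *ᵥ X ω) i * (Sig⁻¹ *ᵥ X ω) j
  have hSig_symm : Sigᵀ = Sig := by
    ext a b
    simp only [transpose_apply, ← hcov, mul_comm]
  have hW (h : Ω → ℝ) (hh : ∀ a b, Integrable (fun ω => h ω * (X ω a * X ω b)) μ) :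
      Integrable (fun ω => h ω * W ω) μ :=
    integrable_mul_mulVec_apply_mul_mulVec_apply _ _ hh i j
  have hW_int : Integrable W μ := by simpa using hW (fun _ => 1) (by simpa using hmom2)
  have hXW (m : Fin p) : ∫ ω, X ω m * W ω ∂μ = 0 := by
    rw [integral_mul_mulVec_apply_mul_mulVec_apply _ _
      (fun a b => by simpa only [mul_assoc] using hmom3 m a b)]
    simp [← mul_assoc, hC1]
  have hεW_indep : IndepFun ε W μ :=
    hindep.comp (ψ := fun x => (Sig⁻¹ *ᵥ x) i * (Sig⁻¹ *ᵥ x) j) measurable_id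
      (Continuous.measurable (by fun_prop))
  have hεW : ∫ ω, ε ω * W ω ∂μ = (∫ ω, ε ω ∂μ) * ∫ ω, W ω ∂μ :=
    hεW_indep.integral_mul_eq_mul_integral hεint.aestronglyMeasurable
      hW_int.aestronglyMeasurable
  have hΨ_cov : Ψ i j = ∫ ω, (Y ω - ∫ ω', Y ω' ∂μ) * W ω ∂μ := by
    rw [hΨ, mul_mul_apply_eq_integral_of_transpose_eq
      (by rw [transpose_nonsing_inv, hSig_symm]) hSyxx
      fun a b => Integrable.sub_const_mul (g := fun ω => X ω a * X ω b)
        (by simpa only [mul_assoc] using hYXX a b) (hmom2 a b) _]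
  have hcov_YW := integral_centered_mul_of_quadratic_model hY hXint hmom2 hεint hW_int
    (fun m => hW _ fun a b => by simpa only [mul_assoc] using hmom3 m a b)
    (fun k l => hW _ fun a b => by simpa only [mul_assoc] using hmom4 k l a b)
    (hεW_indep.integrable_mul hεint hW_int)
  simp only [hXW, hmean, hεW, zero_mul, sub_self, mul_zero, Finset.sum_const_zero, zero_add,
    add_zero] at hcov_YW
  exact hΨ_cov.trans hcov_YW

/-- Key intermediate identity in the proof of Proposition 2: if `X` is mean-zero with
positive definite covariance `Σ_X`, finite fourth moments, and vanishing third moments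
(condition C1), and `Y` follows model (2) with `ε` mean-zero and independent of `X`, then
with `Z = Σ_X⁻¹X`, every entry of the principal Hessian matrix
`Ψ = Σ_X⁻¹ Σ_{YXX} Σ_X⁻¹` satisfies
`ψ_{ij} = Σ_{k ≤ ℓ} β_{kℓ} · Cov(X_k X_ℓ, Z_i Z_j)`. -/
theorem prop2_key_identity {Ω : Type*} [MeasurableSpace Ω] (μ : Measure Ω)
    [IsProbabilityMeasure μ] {p : ℕ}
    (X : Ω → Fin p → ℝ) (hXm : Measurable X)
    (Sig : Matrix (Fin p) (Fin p) ℝ) (hSig : Sig.PosDef)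
    (hmean : ∀ i, ∫ ω, X ω i ∂μ = 0)
    (hcov : ∀ i j, ∫ ω, X ω i * X ω j ∂μ = Sig i j)
    (hmom4 : ∀ i j k l : Fin p, Integrable (fun ω => X ω i * X ω j * X ω k * X ω l) μ)
    (hmom2 : ∀ i j : Fin p, Integrable (fun ω => X ω i * X ω j) μ)
    (hXint : ∀ i, Integrable (fun ω => X ω i) μ)
    -- condition C1: third moments vanish
    (hC1 : ∀ i j k : Fin p, ∫ ω, X ω i * X ω j * X ω k ∂μ = 0)
    (hmom3 : ∀ i j k : Fin p, Integrable (fun ω => X ω i * X ω j * X ω k) μ)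
    (Z : Ω → Fin p → ℝ) (hZ : ∀ ω, Z ω = Sig⁻¹.mulVec (X ω))
    -- model (2)
    (θ : Fin p → ℝ) (β : Fin p → Fin p → ℝ)
    (ε : Ω → ℝ) (hεm : Measurable ε) (hindep : IndepFun ε X μ)
    (hεint : Integrable ε μ) (hεmean : ∫ ω, ε ω ∂μ = 0)
    (Y : Ω → ℝ)
    (hY : ∀ ω, Y ω = ∑ i, θ i * X ω i
        + ∑ i, ∑ j ∈ Finset.Ici i, β i j * X ω i * X ω j + ε ω)
    (hYint : Integrable Y μ)
    (hYXX : ∀ k l : Fin p, Integrable (fun ω => Y ω * X ω k * X ω l) μ)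
    (Syxx Ψ : Matrix (Fin p) (Fin p) ℝ)
    (hSyxx : ∀ k l, Syxx k l = ∫ ω, (Y ω - ∫ ω', Y ω' ∂μ) * (X ω k * X ω l) ∂μ)
    (hΨ : Ψ = Sig⁻¹ * Syxx * Sig⁻¹) :
    ∀ i j : Fin p,
      Ψ i j = ∑ k, ∑ l ∈ Finset.Ici k, β k l *
        ((∫ ω, (X ω k * X ω l) * (Z ω i * Z ω j) ∂μ)
          - (∫ ω, X ω k * X ω l ∂μ) * (∫ ω, Z ω i * Z ω j ∂μ)) :=
  prop2_key_identity_general μ X Sig hmean hcov hmom4 hmom2 hXint hC1 hmom3 Z hZ θ β ε hindep hεint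
    Y hY hYXX Syxx Ψ hSyxx hΨ
end
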